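/- arXiv:2109.07728 — 6 statements merged into one kernel-verified Lean document; each statement's English description precedes it below -/
import Mathlib

section
/- Let A be an abelian category and f• : (X•,α•) → (Y•,β•) a morphism in MMor_k(A). Then f• is the cokernel part of a componentwise short exact sequence with third term again in MMor_k(A) (i.e. an admissible epimorphism) if and only if each component f_i is an epimorphism in A. -/
open CategoryTheory Limits

/-- In the monomorphism category `MMor_k(A)` over an abelian category `A`,
a morphism `f• : (X•,α•) → (Y•,β•)` is an admissible epimorphism (i.e. it is the cokernel
part of a componentwise short exact sequence whose kernel term again lies in `MMor_k(A)`)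
if and only if every component `f i` is an epimorphism in `A`. -/
theorem mmor_admissible_epi_iff
    {A : Type*} [Category A] [Abelian A] (k : ℕ)
    (X Y : Fin (k + 1) → A)
    (α : ∀ i : Fin k, X i.castSucc ⟶ X i.succ)
    (β : ∀ i : Fin k, Y i.castSucc ⟶ Y i.succ)
    (hα : ∀ i, Mono (α i)) (hβ : ∀ i, Mono (β i))
    (f : ∀ i, X i ⟶ Y i)
    (hf : ∀ i : Fin k, α i ≫ f i.succ = f i.castSucc ≫ β i) :
    (∃ (K : Fin (k + 1) → A)
       (κ : ∀ i : Fin k, K i.castSucc ⟶ K i.succ)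
       (g : ∀ i, K i ⟶ X i)
       (w : ∀ i, g i ≫ f i = 0),
       (∀ i, Mono (κ i)) ∧
       (∀ i : Fin k, κ i ≫ g i.succ = g i.castSucc ≫ α i) ∧
       (∀ i, (ShortComplex.mk (g i) (f i) (w i)).ShortExact))
    ↔ ∀ i, Epi (f i) := by
  constructor
  · rintro ⟨K, κ, g, w, hκ, hcomm, hse⟩ i
    exact (hse i).epi_g
  · intro hepi
    refine ⟨fun i => kernel (f i),
      fun i => kernel.lift (f i.succ) (kernel.ι (f i.castSucc) ≫ α i)
        (by rw [Category.assoc, hf, ← Category.assoc, kernel.condition, zero_comp]),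
      fun i => kernel.ι (f i), fun i => kernel.condition (f i), ?_, ?_, ?_⟩
    · intro i
      have h : kernel.lift (f i.succ) (kernel.ι (f i.castSucc) ≫ α i)
          (by rw [Category.assoc, hf, ← Category.assoc, kernel.condition, zero_comp])
          ≫ kernel.ι (f i.succ) = kernel.ι (f i.castSucc) ≫ α i :=
        kernel.lift_ι _ _ _
      have : Mono (kernel.ι (f i.castSucc) ≫ α i) := by
        have := hα i; infer_instance
      rw [← h] at this
      exact mono_of_mono _ (kernel.ι (f i.succ))
    · intro i
      exact kernel.lift_ι _ _ _
    · intro i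
      have := hepi i
      refine ⟨?_⟩
      exact ShortComplex.exact_of_f_is_kernel _ (kernelIsKernel (f i))
end

section
/- Let A be an abelian category and f• : (X•,α•) → (Y•,β•) a morphism in MMor_k(A). Then f• is an admissible monomorphism (the cokernel, computed componentwise, again lies in MMor_k(A)) if and only if each f_i is a monomorphism and for each 1 ≤ i ≤ k the commutative square with sides α_i, f_i, f_{i+1}, β_i is a pullback square in A. -/
open CategoryTheory Limits

namespace CategoryTheory.ShortComplex

variable {C : Type*} [Category C] [Preadditive C] [Balanced C] {S₁ S₂ : ShortComplex C}

lemma isPullback_of_exact_of_mono_τ₃ (φ : S₁ ⟶ S₂) (h₁ : S₁.Exact) [Mono S₁.f] [Mono S₂.f]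
    [Mono φ.τ₃] : IsPullback φ.τ₁ S₁.f S₂.f φ.τ₂ := by
  -- A cone `(x, y)` has `y ≫ S₁.g = 0` because `φ.τ₃` is mono,
  -- so `y` factors through the kernel `S₁.f` of `S₁.g`.
  refine IsPullback.of_isLimit (PullbackCone.IsLimit.mk φ.comm₁₂
    (fun s => h₁.lift s.snd ?_) (fun s => ?_) (fun s => h₁.lift_f _ _) ?_)
  · rw [← cancel_mono φ.τ₃, Category.assoc, ← φ.comm₂₃, ← s.condition_assoc, S₂.zero,
      comp_zero, zero_comp]
  · rw [← cancel_mono S₂.f, Category.assoc, φ.comm₁₂, h₁.lift_f_assoc, s.condition]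
  · intro s m _ hm
    rw [← cancel_mono S₁.f, hm, h₁.lift_f]

end CategoryTheory.ShortComplex

theorem mmor_admissible_mono_iff_general
    {A : Type*} [Category A] [Abelian A] (k : ℕ)
    (X Y : Fin (k + 1) → A)
    (α : ∀ i : Fin k, X i.castSucc ⟶ X i.succ)
    (β : ∀ i : Fin k, Y i.castSucc ⟶ Y i.succ)
    (f : ∀ i, X i ⟶ Y i)
    (hf : ∀ i : Fin k, α i ≫ f i.succ = f i.castSucc ≫ β i) :
    (∃ (Q : Fin (k + 1) → A)
       (γ : ∀ i : Fin k, Q i.castSucc ⟶ Q i.succ)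
       (g : ∀ i, Y i ⟶ Q i)
       (w : ∀ i, f i ≫ g i = 0),
       (∀ i, Mono (γ i)) ∧
       (∀ i : Fin k, β i ≫ g i.succ = g i.castSucc ≫ γ i) ∧
       (∀ i, (ShortComplex.mk (f i) (g i) (w i)).ShortExact))
    ↔ ((∀ i, Mono (f i)) ∧
       ∀ i : Fin k, IsPullback (α i) (f i.castSucc) (f i.succ) (β i)) := by
  constructor
  · rintro ⟨Q, γ, g, w, hγ, hβg, hS⟩
    refine ⟨fun i => (hS i).mono_f, fun i => ?_⟩
    have := (hS i.castSucc).mono_f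
    have := (hS i.succ).mono_f
    let φ : ShortComplex.mk _ _ (w i.castSucc) ⟶ ShortComplex.mk _ _ (w i.succ) :=
      { τ₁ := α i, τ₂ := β i, τ₃ := γ i, comm₁₂ := hf i, comm₂₃ := hβg i }
    exact ShortComplex.isPullback_of_exact_of_mono_τ₃ φ (hS i.castSucc).exact
  · rintro ⟨hf_mono, hpb⟩
    refine ⟨fun i => cokernel (f i),
      fun i => cokernel.map (f i.castSucc) (f i.succ) (α i) (β i) (hf i).symm,
      fun i => cokernel.π (f i), fun i => cokernel.condition (f i),
      fun i => Abelian.mono_cokernel_map_of_isPullback (hpb i).flip,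
      fun i => (cokernel.π_desc _ _ _).symm,
      fun i => { exact := ShortComplex.exact_cokernel (f i) }⟩

/-- In the monomorphism category `MMor_k(A)` over an abelian category `A`,
a morphism `f• : (X•,α•) → (Y•,β•)` is an admissible monomorphism (i.e. it is the kernel
part of a componentwise short exact sequence whose cokernel term again lies in
`MMor_k(A)`) if and only if every component `f i` is a monomorphism and every square
with sides `α i`, `f i`, `f (i+1)`, `β i` is a pullback square in `A`. -/
theorem mmor_admissible_mono_iff
    {A : Type*} [Category A] [Abelian A] (k : ℕ)
    (X Y : Fin (k + 1) → A)
    (α : ∀ i : Fin k, X i.castSucc ⟶ X i.succ)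
    (β : ∀ i : Fin k, Y i.castSucc ⟶ Y i.succ)
    (hα : ∀ i, Mono (α i)) (hβ : ∀ i, Mono (β i))
    (f : ∀ i, X i ⟶ Y i)
    (hf : ∀ i : Fin k, α i ≫ f i.succ = f i.castSucc ≫ β i) :
    (∃ (Q : Fin (k + 1) → A)
       (γ : ∀ i : Fin k, Q i.castSucc ⟶ Q i.succ)
       (g : ∀ i, Y i ⟶ Q i)
       (w : ∀ i, f i ≫ g i = 0),
       (∀ i, Mono (γ i)) ∧
       (∀ i : Fin k, β i ≫ g i.succ = g i.castSucc ≫ γ i) ∧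
       (∀ i, (ShortComplex.mk (f i) (g i) (w i)).ShortExact))
    ↔ ((∀ i, Mono (f i)) ∧
       ∀ i : Fin k, IsPullback (α i) (f i.castSucc) (f i.succ) (β i)) :=
  mmor_admissible_mono_iff_general k X Y α β f hf
end

section
/- Let E be an exact category. An object (I•, ι•) of MMor_k(E) is an injective object of the exact category MMor_k(E) if and only if each I_i is injective in E and each structure map ι_i : I_i → I_{i+1} is a split monomorphism. -/
open CategoryTheory Limits

universe v u

/-- An exact structure (in the sense of Quillen/Bühler) on an additive category `E`:
a class of kernel–cokernel pairs (`ses f g` meaning `X ↣ Y ↠ Z` is an admissible short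
exact sequence), closed under isomorphism, such that admissible monomorphisms (resp.
epimorphisms) contain identities, are closed under composition, and are stable under
pushout (resp. pullback). -/
structure ExactStructure (E : Type u) [Category.{v} E] [Preadditive E] [HasZeroObject E] where
  ses : ∀ ⦃X Y Z : E⦄, (X ⟶ Y) → (Y ⟶ Z) → Prop
  comp_zero : ∀ {X Y Z : E} {f : X ⟶ Y} {g : Y ⟶ Z}, ses f g → f ≫ g = 0
  isKernel : ∀ {X Y Z : E} {f : X ⟶ Y} {g : Y ⟶ Z} (h : ses f g),
      Nonempty (IsLimit (KernelFork.ofι f (comp_zero h)))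
  isCokernel : ∀ {X Y Z : E} {f : X ⟶ Y} {g : Y ⟶ Z} (h : ses f g),
      Nonempty (IsColimit (CokernelCofork.ofπ g (comp_zero h)))
  iso_closed : ∀ {X Y Z X' Y' Z' : E} {f : X ⟶ Y} {g : Y ⟶ Z}
      (eX : X ≅ X') (eY : Y ≅ Y') (eZ : Z ≅ Z') {f' : X' ⟶ Y'} {g' : Y' ⟶ Z'},
      f ≫ eY.hom = eX.hom ≫ f' → g ≫ eZ.hom = eY.hom ≫ g' → ses f g → ses f' g'
  id_mono : ∀ X : E, ∃ (Z : E) (g : X ⟶ Z), ses (𝟙 X) g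
  id_epi : ∀ X : E, ∃ (W : E) (f : W ⟶ X), ses f (𝟙 X)
  mono_comp : ∀ {X Y Z : E} {f : X ⟶ Y} {g : Y ⟶ Z},
      (∃ (W : E) (h : Y ⟶ W), ses f h) → (∃ (W : E) (h : Z ⟶ W), ses g h) →
      ∃ (W : E) (h : Z ⟶ W), ses (f ≫ g) h
  epi_comp : ∀ {X Y Z : E} {f : X ⟶ Y} {g : Y ⟶ Z},
      (∃ (W : E) (h : W ⟶ X), ses h f) → (∃ (W : E) (h : W ⟶ Y), ses h g) →
      ∃ (W : E) (h : W ⟶ X), ses h (f ≫ g)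
  mono_pushout : ∀ {X Y Z : E} (f : X ⟶ Y) (t : X ⟶ Z),
      (∃ (W : E) (g : Y ⟶ W), ses f g) →
      ∃ (P : E) (f' : Z ⟶ P) (t' : Y ⟶ P), IsPushout t f f' t' ∧
        ∃ (W : E) (g : P ⟶ W), ses f' g
  epi_pullback : ∀ {X Y Z : E} (g : Y ⟶ X) (t : Z ⟶ X),
      (∃ (W : E) (f : W ⟶ Y), ses f g) →
      ∃ (P : E) (g' : P ⟶ Z) (t' : P ⟶ Y), IsPullback g' t' t g ∧
        ∃ (W : E) (f : W ⟶ P), ses f g'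

namespace ExactStructure

variable {E : Type u} [Category.{v} E] [Preadditive E] [HasZeroObject E]
variable (S : ExactStructure E)

/-- `f` is an admissible monomorphism. -/
def AdmMono {X Y : E} (f : X ⟶ Y) : Prop := ∃ (Z : E) (g : Y ⟶ Z), S.ses f g

/-- `g` is an admissible epimorphism. -/
def AdmEpi {Y Z : E} (g : Y ⟶ Z) : Prop := ∃ (X : E) (f : X ⟶ Y), S.ses f g

/-- An object of `E` is injective (w.r.t. the exact structure). -/
def EInjective (I : E) : Prop :=
  ∀ ⦃X Y : E⦄ (f : X ⟶ Y), S.AdmMono f → ∀ u : X ⟶ I, ∃ v : Y ⟶ I, f ≫ v = u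

/-- An object of `E` is projective (w.r.t. the exact structure). -/
def EProjective (P : E) : Prop :=
  ∀ ⦃Y Z : E⦄ (g : Y ⟶ Z), S.AdmEpi g → ∀ u : P ⟶ Z, ∃ v : P ⟶ Y, v ≫ g = u

/-- An object of the monomorphism category `MMor_k(E)`: a diagram of `k` composable
admissible monomorphisms in `E`. -/
structure MMorObj (k : ℕ) where
  obj : Fin (k + 1) → E
  map : ∀ i : Fin k, obj i.castSucc ⟶ obj i.succ
  adm : ∀ i, S.AdmMono (map i)

/-- A morphism in the monomorphism category `MMor_k(E)`. -/
structure MMorHom {k : ℕ} (X Y : S.MMorObj k) where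
  app : ∀ i, X.obj i ⟶ Y.obj i
  comm : ∀ i : Fin k, X.map i ≫ app i.succ = app i.castSucc ≫ Y.map i

variable {S}

/-- A componentwise admissible short exact sequence in `MMor_k(E)`. -/
def MMorSes {k : ℕ} {X Y Z : S.MMorObj k} (f : S.MMorHom X Y) (g : S.MMorHom Y Z) : Prop :=
  ∀ i, S.ses (f.app i) (g.app i)

/-- Admissible monomorphisms of `MMor_k(E)`. -/
def MMorAdmMono {k : ℕ} {X Y : S.MMorObj k} (f : S.MMorHom X Y) : Prop :=
  ∃ (Z : S.MMorObj k) (g : S.MMorHom Y Z), MMorSes f g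

/-- Admissible epimorphisms of `MMor_k(E)`. -/
def MMorAdmEpi {k : ℕ} {Y Z : S.MMorObj k} (g : S.MMorHom Y Z) : Prop :=
  ∃ (X : S.MMorObj k) (f : S.MMorHom X Y), MMorSes f g

/-- Injective objects of the exact category `MMor_k(E)`. -/
def MMorInjective {k : ℕ} (I : S.MMorObj k) : Prop :=
  ∀ ⦃X Y : S.MMorObj k⦄ (f : S.MMorHom X Y), MMorAdmMono f →
    ∀ u : S.MMorHom X I, ∃ v : S.MMorHom Y I, ∀ i, f.app i ≫ v.app i = u.app i

/-- Projective objects of the exact category `MMor_k(E)`. -/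
def MMorProjective {k : ℕ} (P : S.MMorObj k) : Prop :=
  ∀ ⦃Y Z : S.MMorObj k⦄ (g : S.MMorHom Y Z), MMorAdmEpi g →
    ∀ u : S.MMorHom P Z, ∃ v : S.MMorHom P Y, ∀ i, v.app i ≫ g.app i = u.app i

end ExactStructure

/-! For the forward direction, `A ↦ (0 → ⋯ → 0 → A = ⋯ = A)` (with `A` from degree `j` on) is
exact, and morphisms from it to `I` correspond to morphisms `A ⟶ I.obj j`; so injectivity of `I`
gives injectivity of `I.obj j`, and `I.map i` splits because its source is injective.
Conversely, if every `I.obj i` is injective, an extension along a componentwise admissible mono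
`X ↣ Y` with cokernel `Z` is built degree by degree, using the cokernel property of `X ↣ Y`
and the admissible monos of `Z` to make each new component compatible with the previous one. -/

open ZeroObject

section

variable {E : Type u} [Category.{v} E] [HasZeroObject E] {k : ℕ}

noncomputable def constFromObj (j : Fin (k + 1)) (A : E) (i : Fin (k + 1)) : E :=
  if j ≤ i then A else 0

lemma constFromObj_of_le {j i : Fin (k + 1)} (A : E) (h : j ≤ i) : constFromObj j A i = A :=
  if_pos h

lemma isZero_constFromObj_of_lt {j i : Fin (k + 1)} (A : E) (h : i < j) :
    IsZero (constFromObj j A i) := by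
  rw [constFromObj, if_neg (not_le.2 h)]
  exact isZero_zero E

end

namespace ExactStructure

variable {E : Type u} [Category.{v} E] [Preadditive E] [HasZeroObject E] (S : ExactStructure E)

lemma ses_zero_id (B : E) : S.ses (0 : (0 : E) ⟶ B) (𝟙 B) := by
  obtain ⟨W, w, hw⟩ := S.id_epi B
  have hw0 : w = 0 := by simpa using S.comp_zero hw
  obtain ⟨hl⟩ := S.isKernel hw
  have hW : IsZero W := by
    rw [IsZero.iff_id_eq_zero]
    exact Fork.IsLimit.hom_ext hl (by simp [hw0])
  exact S.iso_closed hW.isoZero (Iso.refl B) (Iso.refl B) (by simp [hw0]) (by simp) hw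

lemma ses_of_isZero {A B C : E} (hA : IsZero A) (hB : IsZero B) (hC : IsZero C)
    (f : A ⟶ B) (g : B ⟶ C) : S.ses f g :=
  S.iso_closed hA.isoZero.symm hB.isoZero.symm hC.isoZero.symm
    ((isZero_zero E).eq_of_src _ _) ((isZero_zero E).eq_of_src _ _) (S.ses_zero_id 0)

lemma admMono_of_isZero {A B : E} (hA : IsZero A) (f : A ⟶ B) : S.AdmMono f :=
  ⟨B, 𝟙 B, S.iso_closed hA.isoZero.symm (Iso.refl B) (Iso.refl B)
    ((isZero_zero E).eq_of_src _ _) (by simp) (S.ses_zero_id B)⟩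

lemma admMono_eqToHom {A B : E} (h : A = B) : S.AdmMono (eqToHom h) := by
  subst h
  obtain ⟨Z, g, hg⟩ := S.id_mono A
  exact ⟨Z, g, by simpa using hg⟩

lemma ses_eqToHom_conj {A A' B B' C C' : E} {f : A ⟶ B} {g : B ⟶ C}
    (hA : A' = A) (hB : B' = B) (hC : C' = C) (h : S.ses f g) :
    S.ses (eqToHom hA ≫ f ≫ eqToHom hB.symm) (eqToHom hB ≫ g ≫ eqToHom hC.symm) := by
  subst hA hB hC
  simpa using h

variable {S}

lemma EInjective.exists_retraction {X Y : E} (hX : S.EInjective X) {f : X ⟶ Y}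
    (hf : S.AdmMono f) : ∃ r : Y ⟶ X, f ≫ r = 𝟙 X :=
  hX f hf (𝟙 X)

variable {k : ℕ}

namespace MMorObj

noncomputable def mapOfLE (X : S.MMorObj k) {a b : Fin (k + 1)} (h : a ≤ b) : X.obj a ⟶ X.obj b :=
  (ComposableArrows.mkOfObjOfMapSucc X.obj X.map).map (homOfLE h)

@[simp]
lemma mapOfLE_refl (X : S.MMorObj k) (a : Fin (k + 1)) : X.mapOfLE le_rfl = 𝟙 (X.obj a) :=
  (ComposableArrows.mkOfObjOfMapSucc X.obj X.map).map_id a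

lemma mapOfLE_succ (X : S.MMorObj k) {a : Fin (k + 1)} {i : Fin k} (h : a ≤ i.castSucc) :
    X.mapOfLE (h.trans i.castSucc_le_succ) = X.mapOfLE h ≫ X.map i := by
  rw [mapOfLE, mapOfLE, ← homOfLE_comp h i.castSucc_le_succ, Functor.map_comp]
  congr 1
  exact ComposableArrows.mkOfObjOfMapSucc_map_succ X.obj X.map i i.isLt

end MMorObj

variable (S) in
noncomputable def MMorObj.constFrom (j : Fin (k + 1)) (A : E) : S.MMorObj k where
  obj := constFromObj j A
  map i :=
    if h : j ≤ i.castSucc then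
      eqToHom ((constFromObj_of_le A h).trans
        (constFromObj_of_le A (h.trans i.castSucc_le_succ)).symm)
    else 0
  adm i := by
    split_ifs with h
    · exact S.admMono_eqToHom _
    · exact S.admMono_of_isZero (isZero_constFromObj_of_lt A (not_le.1 h)) _

noncomputable def MMorHom.constFrom (j : Fin (k + 1)) {A B : E} (φ : A ⟶ B) :
    S.MMorHom (MMorObj.constFrom S j A) (MMorObj.constFrom S j B) where
  app i :=
    if h : j ≤ i then
      eqToHom (constFromObj_of_le A h) ≫ φ ≫ eqToHom (constFromObj_of_le B h).symm
    else 0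
  comm i := by
    by_cases h : j ≤ i.castSucc
    · simp [MMorObj.constFrom, h, h.trans i.castSucc_le_succ]
    · exact (isZero_constFromObj_of_lt A (not_le.1 h)).eq_of_src _ _

noncomputable def MMorHom.constFromLift (I : S.MMorObj k) (j : Fin (k + 1)) {A : E}
    (u : A ⟶ I.obj j) : S.MMorHom (MMorObj.constFrom S j A) I where
  app i := if h : j ≤ i then eqToHom (constFromObj_of_le A h) ≫ u ≫ I.mapOfLE h else 0
  comm i := by
    by_cases h : j ≤ i.castSucc
    · simp [MMorObj.constFrom, h, h.trans i.castSucc_le_succ, I.mapOfLE_succ h]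
    · exact (isZero_constFromObj_of_lt A (not_le.1 h)).eq_of_src _ _

lemma MMorSes.constFrom (j : Fin (k + 1)) {A B C : E} {φ : A ⟶ B} {ψ : B ⟶ C}
    (h : S.ses φ ψ) : MMorSes (MMorHom.constFrom (S := S) j φ) (MMorHom.constFrom j ψ) := by
  intro i
  by_cases hi : j ≤ i
  · simp only [MMorHom.constFrom, dif_pos hi]
    exact S.ses_eqToHom_conj (constFromObj_of_le A hi) (constFromObj_of_le B hi)
        (constFromObj_of_le C hi) h
  · have hi := not_le.1 hi
    exact S.ses_of_isZero (isZero_constFromObj_of_lt A hi) (isZero_constFromObj_of_lt B hi)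
      (isZero_constFromObj_of_lt C hi) _ _

lemma eInjective_obj_of_mmorInjective {I : S.MMorObj k} (hI : MMorInjective I)
    (j : Fin (k + 1)) : S.EInjective (I.obj j) := by
  rintro X Y f ⟨Z, g, hfg⟩ u
  obtain ⟨v, hv⟩ := hI (MMorHom.constFrom j f) ⟨_, _, MMorSes.constFrom j hfg⟩
    (MMorHom.constFromLift I j u)
  refine ⟨eqToHom (constFromObj_of_le Y le_rfl).symm ≫ v.app j, ?_⟩
  have hj := hv j
  simp only [MMorHom.constFrom, MMorHom.constFromLift, dif_pos le_rfl, MMorObj.mapOfLE_refl,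
    Category.comp_id, Category.assoc] at hj
  exact (cancel_epi (eqToHom (constFromObj_of_le X le_rfl))).1 hj

lemma MMorSes.exists_extension_succ {X Y Z I : S.MMorObj k} {f : S.MMorHom X Y}
    {g : S.MMorHom Y Z} (hfg : MMorSes f g) (u : S.MMorHom X I) (i : Fin k)
    (hI : S.EInjective (I.obj i.succ)) {v : Y.obj i.castSucc ⟶ I.obj i.castSucc}
    (hv : f.app i.castSucc ≫ v = u.app i.castSucc) :
    ∃ w : Y.obj i.succ ⟶ I.obj i.succ,
      f.app i.succ ≫ w = u.app i.succ ∧ Y.map i ≫ w = v ≫ I.map i := by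
  obtain ⟨w₀, hw₀⟩ := hI (f.app i.succ) ⟨_, _, hfg i.succ⟩ (u.app i.succ)
  have hdefect : f.app i.castSucc ≫ (v ≫ I.map i - Y.map i ≫ w₀) = 0 := by
    rw [Preadditive.comp_sub, reassoc_of% hv, ← reassoc_of% f.comm i, hw₀, u.comm i, sub_self]
  -- `w₀` is corrected by a map that kills `X`: the defect vanishes on `X.obj i.castSucc`, so it
  -- factors through `Z.obj i.castSucc` and extends along the admissible mono `Z.map i`.
  obtain ⟨hcoker⟩ := S.isCokernel (hfg i.castSucc)
  obtain ⟨e, he⟩ := CokernelCofork.IsColimit.desc' hcoker _ hdefect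
  obtain ⟨e', he'⟩ := hI (Z.map i) (Z.adm i) e
  refine ⟨w₀ + g.app i.succ ≫ e', ?_, ?_⟩
  · rw [Preadditive.comp_add, hw₀, reassoc_of% S.comp_zero (hfg i.succ), zero_comp, add_zero]
  · have hcorr : Y.map i ≫ g.app i.succ ≫ e' = v ≫ I.map i - Y.map i ≫ w₀ := by
      rw [reassoc_of% g.comm i, he']
      exact he
    rw [Preadditive.comp_add, hcorr, add_sub_cancel]

lemma mmorInjective_of_forall_eInjective {I : S.MMorObj k}
    (hI : ∀ i, S.EInjective (I.obj i)) : MMorInjective I := by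
  rintro X Y f ⟨Z, g, hfg⟩ u
  choose w hwf hwY using fun i v (hv : _ = u.app i.castSucc) =>
    hfg.exists_extension_succ u i (hI i.succ) hv
  obtain ⟨v₀, hv₀⟩ := hI 0 (f.app 0) ⟨_, _, hfg 0⟩ (u.app 0)
  let v : ∀ i, {v : Y.obj i ⟶ I.obj i // f.app i ≫ v = u.app i} :=
    Fin.induction ⟨v₀, hv₀⟩ fun i v => ⟨w i v.1 v.2, hwf i v.1 v.2⟩
  refine ⟨⟨fun i => (v i).1, fun i => ?_⟩, fun i => (v i).2⟩
  simp only [v, Fin.induction_succ]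
  exact hwY i _ _

end ExactStructure

/-- Let `E` be an exact category.  An object `(I•, ι•)` of `MMor_k(E)` is
injective in the exact category `MMor_k(E)` if and only if each `I i` is injective in `E`
and each structure map `ι i` is a split monomorphism. -/
theorem mmor_injective_iff
    {E : Type u} [Category.{v} E] [Preadditive E] [HasZeroObject E]
    (S : ExactStructure E) (k : ℕ) (I : S.MMorObj k) :
    ExactStructure.MMorInjective I ↔
      ((∀ i, S.EInjective (I.obj i)) ∧
        ∀ i : Fin k, ∃ r : I.obj i.succ ⟶ I.obj i.castSucc, I.map i ≫ r = 𝟙 (I.obj i.castSucc)) := by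
  refine ⟨fun hI => ?_, fun h => ExactStructure.mmorInjective_of_forall_eInjective h.1⟩
  have hinj := ExactStructure.eInjective_obj_of_mmorInjective hI
  exact ⟨hinj, fun i => (hinj i.castSucc).exists_retraction (I.adm i)⟩
end

section
/- Let E be an exact category. An object (P•, ι•) of MMor_k(E) is a projective object of the exact category MMor_k(E) if and only if each P_i is projective in E and each structure map ι_i is a split monomorphism. -/
open CategoryTheory Limits

universe v u

/-!
For `⇐`, lifts into the middle term of a componentwise admissible sequence `X ↣ Y ↠ Z` are
built one index at a time: a lift `v` at `i` gives `P_i ⟶ Y_{i+1}` along `ι_i`, any lift `w` at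
`i + 1` (as `P_{i+1}` is projective) differs from it on `P_i` by a map into `X_{i+1}`, and this
error is extended to `P_{i+1}` through a retraction of `ι_i` and added to `w`.

For `⇒`, the diagram `P_0 ⟶ P_0 ⊞ P_1 ⟶ P_0 ⊞ P_2 ⟶ ⋯` (first map `inl`, then `𝟙 ⊞ ι_i`)
maps onto `P` by an admissible epimorphism with kernel `0 ⟶ P_0 ⟶ P_0 ⟶ ⋯`; lifting `𝟙 P`
through it turns `inl ≫ fst = 𝟙` into a retraction of `ι_0`. Projectivity passes to the diagram without its bottom object (extend
test diagrams downwards by an identity), which splits the other `ι_i`. Then `P_j ⟶ P_k` is a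
split monomorphism, so a map `P_j ⟶ C` extends through a retraction to a morphism from `P` to the
constant diagram on `C`, and lifting it through the constant diagram on an admissible
epimorphism `B ↠ C` shows that `P_j` is projective.
-/

namespace ExactStructure

open ZeroObject

variable {E : Type u} [Category.{v} E] [Preadditive E] [HasZeroObject E] {S : ExactStructure E}

section ExactCategory

theorem ses_zero_id_s4 (S : ExactStructure E) (Z : E) : S.ses (0 : (0 : E) ⟶ Z) (𝟙 Z) := by
  obtain ⟨W, f, h⟩ := S.id_epi Z
  have hf : f = 0 := by simpa using S.comp_zero h
  have hzero : IsLimit (KernelFork.ofι (0 : (0 : E) ⟶ Z) (zero_comp : 0 ≫ 𝟙 Z = 0)) :=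
    KernelFork.IsLimit.ofι _ _ (fun _ _ => 0) (fun _ hg => by simpa using hg.symm)
      (fun _ _ _ _ => (isZero_zero E).eq_of_tgt _ _)
  exact S.iso_closed ((S.isKernel h).some.conePointUniqueUpToIso hzero) (Iso.refl Z)
    (Iso.refl Z) (by simp [hf]) (by simp) h

theorem admMono_zero (S : ExactStructure E) (Z : E) : S.AdmMono (0 : (0 : E) ⟶ Z) :=
  ⟨Z, 𝟙 Z, S.ses_zero_id_s4 Z⟩

theorem AdmMono.comp_iso {X Y Y' : E} {f : X ⟶ Y} (hf : S.AdmMono f) (e : Y ≅ Y') :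
    S.AdmMono (f ≫ e.hom) := by
  obtain ⟨W, g, hg⟩ := hf
  exact ⟨W, e.inv ≫ g, S.iso_closed (Iso.refl X) e (Iso.refl W) (by simp) (by simp) hg⟩

theorem AdmMono.iso_comp {X' X Y : E} {f : X ⟶ Y} (hf : S.AdmMono f) (e : X' ≅ X) :
    S.AdmMono (e.hom ≫ f) := by
  obtain ⟨W, g, hg⟩ := hf
  exact ⟨W, g, S.iso_closed e.symm (Iso.refl Y) (Iso.refl W) (by simp) (by simp) hg⟩

theorem ses_of_isColimit {X Y Z W : E} {f : X ⟶ Y} {g : Y ⟶ Z} (h : S.ses f g)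
    {g' : Y ⟶ W} (w : f ≫ g' = 0) (hg' : IsColimit (CokernelCofork.ofπ g' w)) :
    S.ses f g' := by
  let e := (S.isCokernel h).some.coconePointUniqueUpToIso hg'
  have he : g ≫ e.hom = g' := by
    simpa using (S.isCokernel h).some.comp_coconePointUniqueUpToIso_hom hg'
      WalkingParallelPair.one
  exact S.iso_closed (Iso.refl X) (Iso.refl Y) e (by simp) (by simp [he]) h

theorem exists_lift_of_ses {X Y Z A : E} {f : X ⟶ Y} {g : Y ⟶ Z} (h : S.ses f g)
    (d : A ⟶ Y) (hd : d ≫ g = 0) : ∃ e : A ⟶ X, e ≫ f = d :=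
  ⟨_, (KernelFork.IsLimit.lift' (S.isKernel h).some d hd).2⟩

theorem hasBinaryBiproducts (S : ExactStructure E) : HasBinaryBiproducts E := by
  refine ⟨fun A B => ?_⟩
  obtain ⟨Q, inl, inr, hpo, -⟩ :=
    S.mono_pushout (0 : (0 : E) ⟶ B) (0 : (0 : E) ⟶ A) (S.admMono_zero B)
  have := HasColimit.mk ⟨_, isCoproductOfIsInitialIsPushout inl inr 0 0
    (isZero_zero E).isInitial hpo.isColimit⟩
  exact HasBinaryBiproduct.of_hasBinaryCoproduct A B

variable [HasBinaryBiproducts E]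

theorem ses_inl_snd (S : ExactStructure E) (A B : E) :
    S.ses (biprod.inl : A ⟶ A ⊞ B) biprod.snd := by
  obtain ⟨Q, f, _, hpo, W, g, hg⟩ :=
    S.mono_pushout (0 : (0 : E) ⟶ B) (0 : (0 : E) ⟶ A) (S.admMono_zero B)
  let e := hpo.isoIsPushout _ _ (IsPushout.of_has_biproduct A B)
  have hinl : S.ses (biprod.inl : A ⟶ A ⊞ B) (e.inv ≫ g) := by
    refine S.iso_closed (Iso.refl A) e (Iso.refl W) ?_ (by simp) hg
    simpa only [Iso.refl_hom, Category.id_comp] using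
      hpo.inl_isoIsPushout_hom _ _ (IsPushout.of_has_biproduct A B)
  exact ses_of_isColimit hinl biprod.inl_snd (biprod.isCokernelInlCokernelFork A B)

theorem ses_lift_desc (S : ExactStructure E) {A B : E} (c : A ⟶ B) :
    S.ses (biprod.lift (𝟙 A) (-c)) (biprod.desc c (𝟙 B)) := by
  let e : A ⊞ B ≅ A ⊞ B :=
    ⟨biprod.desc (biprod.lift (𝟙 A) (-c)) biprod.inr,
      biprod.desc (biprod.lift (𝟙 A) c) biprod.inr, by ext <;> simp, by ext <;> simp⟩
  exact S.iso_closed (Iso.refl A) e (Iso.refl B) (by simp [e])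
    (by apply biprod.hom_ext' <;> simp [e]) (S.ses_inl_snd A B)

theorem admMono_biprod_map_id {A B : E} {f : A ⟶ B} (hf : S.AdmMono f) (C : E) :
    S.AdmMono (biprod.map f (𝟙 C)) := by
  obtain ⟨Q, f', _, hpo, hf'⟩ := S.mono_pushout f (biprod.inl : A ⟶ A ⊞ C) hf
  have hbiprod : IsPushout (biprod.inl : A ⟶ A ⊞ C) f (biprod.map f (𝟙 C)) biprod.inl := by
    refine .of_isColimit (c := PushoutCocone.mk (biprod.map f (𝟙 C)) biprod.inl (by simp)) <|
      PushoutCocone.IsColimit.mk _ (fun s => biprod.desc s.inr (biprod.inr ≫ s.inl))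
        (fun s => ?_) (fun s => by simp) (fun s m h₁ h₂ => ?_)
    · apply biprod.hom_ext' <;> simp [s.condition]
    · apply biprod.hom_ext'
      · simpa using h₂
      · simpa using biprod.inr ≫= h₁
  simpa [hpo.inl_isoIsPushout_hom _ _ hbiprod] using
    AdmMono.comp_iso hf' (hpo.isoIsPushout _ _ hbiprod)

theorem admMono_biprod_map {A B C D : E} {f : A ⟶ B} {g : C ⟶ D}
    (hf : S.AdmMono f) (hg : S.AdmMono g) : S.AdmMono (biprod.map f g) := by
  have hbraid :
      ((biprod.braiding B C).hom ≫ biprod.map g (𝟙 B)) ≫ (biprod.braiding D B).hom =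
        biprod.map (𝟙 B) g := by
    apply biprod.hom_ext' <;> apply biprod.hom_ext <;> simp
  have hg' := hbraid ▸
    ((admMono_biprod_map_id hg B).iso_comp (biprod.braiding B C)).comp_iso (biprod.braiding D B)
  have hfg : biprod.map f g = biprod.map f (𝟙 C) ≫ biprod.map (𝟙 B) g := by
    apply biprod.hom_ext' <;> simp
  exact hfg ▸ S.mono_comp (admMono_biprod_map_id hf C) hg'

end ExactCategory

section Diagrams

variable {k : ℕ}

def MMorObj.tail (P : S.MMorObj (k + 1)) : S.MMorObj k where
  obj i := P.obj i.succ
  map i := P.map i.succ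
  adm i := P.adm i.succ

def MMorObj.cons (T : S.MMorObj k) {A : E} (f : A ⟶ T.obj 0) (hf : S.AdmMono f) :
    S.MMorObj (k + 1) where
  obj := Fin.cons A T.obj
  map := Fin.cases f T.map
  adm := Fin.cases hf T.adm

abbrev MMorObj.const (S : ExactStructure E) (k : ℕ) (A : E) : S.MMorObj k where
  obj _ := A
  map _ := 𝟙 A
  adm _ := S.id_mono A

noncomputable def MMorObj.biprod [HasBinaryBiproducts E] (X Y : S.MMorObj k) : S.MMorObj k where
  obj i := X.obj i ⊞ Y.obj i
  map i := biprod.map (X.map i) (Y.map i)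
  adm i := admMono_biprod_map (X.adm i) (Y.adm i)

def MMorObj.fromZero (P : S.MMorObj k) : ∀ i, P.obj 0 ⟶ P.obj i :=
  Fin.induction (𝟙 _) fun i f => f ≫ P.map i

def MMorObj.toLast (P : S.MMorObj k) : ∀ i, P.obj i ⟶ P.obj (Fin.last k) :=
  Fin.reverseInduction (𝟙 _) fun i f => P.map i ≫ f

def MMorHom.id (X : S.MMorObj k) : S.MMorHom X X where
  app _ := 𝟙 _
  comm _ := by simp

def MMorHom.comp {X Y Z : S.MMorObj k} (f : S.MMorHom X Y) (g : S.MMorHom Y Z) :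
    S.MMorHom X Z where
  app i := f.app i ≫ g.app i
  comm i := by simp [reassoc_of% f.comm, g.comm]

def MMorHom.neg {X Y : S.MMorObj k} (f : S.MMorHom X Y) : S.MMorHom X Y where
  app i := -f.app i
  comm i := by simp [f.comm]

def MMorHom.tail {X Y : S.MMorObj (k + 1)} (f : S.MMorHom X Y) : S.MMorHom X.tail Y.tail where
  app i := f.app i.succ
  comm i := f.comm i.succ

def MMorHom.cons {X Y : S.MMorObj (k + 1)} (f₀ : X.obj 0 ⟶ Y.obj 0)
    (f : S.MMorHom X.tail Y.tail) (w : X.map 0 ≫ f.app 0 = f₀ ≫ Y.map 0) : S.MMorHom X Y where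
  app := Fin.cases f₀ f.app
  comm := Fin.cases w f.comm

def MMorHom.const {A B : E} (f : A ⟶ B) : S.MMorHom (.const S k A) (.const S k B) where
  app _ := f
  comm _ := by simp

noncomputable def MMorHom.biprodLift [HasBinaryBiproducts E] {X Y Z : S.MMorObj k}
    (f : S.MMorHom X Y) (g : S.MMorHom X Z) : S.MMorHom X (Y.biprod Z) where
  app i := biprod.lift (f.app i) (g.app i)
  comm i := by apply biprod.hom_ext <;> simp [MMorObj.biprod, f.comm, g.comm]

noncomputable def MMorHom.biprodDesc [HasBinaryBiproducts E] {X Y Z : S.MMorObj k}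
    (f : S.MMorHom X Z) (g : S.MMorHom Y Z) : S.MMorHom (X.biprod Y) Z where
  app i := biprod.desc (f.app i) (g.app i)
  comm i := by apply biprod.hom_ext' <;> simp [MMorObj.biprod, f.comm, g.comm]

def MMorHom.fromConst {A : E} (P : S.MMorObj k) (f : A ⟶ P.obj 0) :
    S.MMorHom (.const S k A) P where
  app i := f ≫ P.fromZero i
  comm i := by simp [MMorObj.fromZero]

def MMorHom.toConstLast (P : S.MMorObj k) : S.MMorHom P (.const S k (P.obj (Fin.last k))) where
  app := P.toLast
  comm i := by simp [MMorObj.toLast]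

theorem MMorObj.isSplitMono_toLast {P : S.MMorObj k} (h : ∀ i, IsSplitMono (P.map i))
    (j : Fin (k + 1)) : IsSplitMono (P.toLast j) := by
  induction j using Fin.reverseInduction with
  | last => simp only [MMorObj.toLast, Fin.reverseInduction_last]; infer_instance
  | cast i _ =>
    simp only [MMorObj.toLast, Fin.reverseInduction_castSucc]
    exact .mk' ⟨retraction (P.toLast i.succ) ≫ retraction (P.map i), by simp [MMorObj.toLast]⟩

theorem MMorHom.exists_of_forall_exists_succ {P Y : S.MMorObj k}
    (R : ∀ i, (P.obj i ⟶ Y.obj i) → Prop) (h₀ : ∃ v, R 0 v)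
    (hsucc : ∀ i v, R i.castSucc v → ∃ w, R i.succ w ∧ P.map i ≫ w = v ≫ Y.map i) :
    ∃ v : S.MMorHom P Y, ∀ i, R i (v.app i) := by
  choose v₀ hv₀ using h₀
  choose next hnext hcomm using hsucc
  let v : ∀ i, {v // R i v} :=
    Fin.induction ⟨v₀, hv₀⟩ fun i v => ⟨next i v.1 v.2, hnext i v.1 v.2⟩
  exact ⟨⟨fun i => (v i).1, fun i => hcomm i _ _⟩, fun i => (v i).2⟩

end Diagrams

section Projective

variable {k : ℕ}

theorem exists_lift_succ {P X Y Z : S.MMorObj k} {f : S.MMorHom X Y} {g : S.MMorHom Y Z}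
    (hfg : MMorSes f g) (u : S.MMorHom P Z) {i : Fin k} (hP : S.EProjective (P.obj i.succ))
    [IsSplitMono (P.map i)] (v : P.obj i.castSucc ⟶ Y.obj i.castSucc)
    (hv : v ≫ g.app i.castSucc = u.app i.castSucc) :
    ∃ w, w ≫ g.app i.succ = u.app i.succ ∧ P.map i ≫ w = v ≫ Y.map i := by
  obtain ⟨w, hw⟩ := hP (g.app i.succ) ⟨_, _, hfg i.succ⟩ (u.app i.succ)
  obtain ⟨e, he⟩ := exists_lift_of_ses (hfg i.succ) (v ≫ Y.map i - P.map i ≫ w) (by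
    simp [Preadditive.sub_comp, g.comm, reassoc_of% hv, u.comm, hw])
  refine ⟨w + retraction (P.map i) ≫ e ≫ f.app i.succ, ?_, ?_⟩
  · simp [hw, S.comp_zero (hfg i.succ)]
  · simp [he]

theorem mmorProjective_of_eProjective_of_isSplitMono {P : S.MMorObj k}
    (hP : ∀ i, S.EProjective (P.obj i)) (hsplit : ∀ i, IsSplitMono (P.map i)) :
    MMorProjective P := by
  rintro Y Z g ⟨X, f, hfg⟩ u
  exact MMorHom.exists_of_forall_exists_succ (fun i v => v ≫ g.app i = u.app i)
    (hP 0 _ ⟨_, _, hfg 0⟩ _) fun i v hv => exists_lift_succ hfg u (hP i.succ) v hv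

theorem MMorProjective.tail {P : S.MMorObj (k + 1)} (hP : MMorProjective P) :
    MMorProjective P.tail := by
  rintro Y Z g ⟨X, f, hfg⟩ u
  let ext (T : S.MMorObj k) : S.MMorObj (k + 1) := T.cons (𝟙 (T.obj 0)) (S.id_mono _)
  let extHom {T T' : S.MMorObj k} (h : S.MMorHom T T') : S.MMorHom (ext T) (ext T') :=
    MMorHom.cons (h.app 0) h ((Category.id_comp _).trans (Category.comp_id _).symm)
  obtain ⟨v, hv⟩ := hP (extHom g) ⟨ext X, extHom f, Fin.cases (hfg 0) hfg⟩
    (MMorHom.cons (P.map 0 ≫ u.app 0) u (Category.comp_id _).symm)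
  exact ⟨v.tail, fun i => hv i.succ⟩

theorem MMorProjective.isSplitMono_map_zero {P : S.MMorObj (k + 1)} (hP : MMorProjective P) :
    IsSplitMono (P.map 0) := by
  have := S.hasBinaryBiproducts
  let C := MMorObj.const S k (P.obj 0)
  let γ : S.MMorHom C P.tail := MMorHom.fromConst P.tail (P.map 0)
  let K := C.cons (0 : 0 ⟶ P.obj 0) (S.admMono_zero _)
  let Y := (C.biprod P.tail).cons biprod.inl ⟨_, _, S.ses_inl_snd _ _⟩
  let f : S.MMorHom K Y := MMorHom.cons 0 (MMorHom.biprodLift (MMorHom.id C) γ.neg)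
    (zero_comp.trans zero_comp.symm)
  let g : S.MMorHom Y P := MMorHom.cons (𝟙 _) (MMorHom.biprodDesc γ (MMorHom.id _))
    ((biprod.inl_desc _ _).trans ((Category.comp_id _).trans (Category.id_comp _).symm))
  have hfg : MMorSes f g := Fin.cases (S.ses_zero_id_s4 _) fun i => S.ses_lift_desc (γ.app i)
  obtain ⟨v, hv⟩ := hP g ⟨K, f, hfg⟩ (MMorHom.id P)
  have hv₀ : v.app 0 = 𝟙 _ := (Category.comp_id _).symm.trans (hv 0)
  refine IsSplitMono.mk' ⟨v.app 1 ≫ biprod.fst, ?_⟩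
  refine (Category.assoc _ _ _).symm.trans ((v.comm 0 =≫ biprod.fst).trans ?_)
  -- `Y.obj 0` and `Y.map 0` are `P.obj 0` and `biprod.inl` only up to unfolding `Fin.cons`
  erw [hv₀, Category.id_comp, biprod.inl_fst]

theorem MMorProjective.isSplitMono_map :
    ∀ {k : ℕ} {P : S.MMorObj k}, MMorProjective P → ∀ i, IsSplitMono (P.map i)
  | 0, _, _, i => i.elim0
  | _ + 1, _, hP, i => i.cases hP.isSplitMono_map_zero hP.tail.isSplitMono_map

theorem MMorProjective.eProjective_of_retraction {P : S.MMorObj k} (hP : MMorProjective P)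
    {A : E} (ρ : S.MMorHom P (.const S k A)) {j : Fin (k + 1)} (r : A ⟶ P.obj j)
    (hr : ρ.app j ≫ r = 𝟙 _) : S.EProjective (P.obj j) := by
  rintro B C g ⟨K, f, hfg⟩ u
  obtain ⟨v, hv⟩ := hP (MMorHom.const g) ⟨_, MMorHom.const f, fun _ => hfg⟩
    (ρ.comp (MMorHom.const (r ≫ u)))
  exact ⟨v.app j, (hv j).trans ((reassoc_of% hr) u)⟩

theorem MMorProjective.eProjective {P : S.MMorObj k} (hP : MMorProjective P)
    (j : Fin (k + 1)) : S.EProjective (P.obj j) :=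
  have := MMorObj.isSplitMono_toLast hP.isSplitMono_map j
  hP.eProjective_of_retraction (MMorHom.toConstLast P) (retraction (P.toLast j))
    (IsSplitMono.id (P.toLast j))

end Projective

end ExactStructure

/-- Let `E` be an exact category.  An object `(P•, ι•)` of `MMor_k(E)` is
projective in the exact category `MMor_k(E)` if and only if each `P i` is projective in
`E` and each structure map `ι i` is a split monomorphism. -/
theorem mmor_projective_iff
    {E : Type u} [Category.{v} E] [Preadditive E] [HasZeroObject E]
    (S : ExactStructure E) (k : ℕ) (P : S.MMorObj k) :
    ExactStructure.MMorProjective P ↔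
      ((∀ i, S.EProjective (P.obj i)) ∧
        ∀ i : Fin k, ∃ r : P.obj i.succ ⟶ P.obj i.castSucc, P.map i ≫ r = 𝟙 (P.obj i.castSucc)) := by
  refine ⟨fun hP => ⟨hP.eProjective, fun i => ?_⟩, fun ⟨hproj, hsplit⟩ => ?_⟩
  · have := hP.isSplitMono_map i
    exact ⟨retraction _, IsSplitMono.id _⟩
  · refine ExactStructure.mmorProjective_of_eProjective_of_isSplitMono hproj fun i => ?_
    obtain ⟨r, hr⟩ := hsplit i
    exact .mk' ⟨r, hr⟩
end

section
/- Let E be an exact category with enough injectives. Then MMor_k(E) has enough injectives: for every object (X•, α•) in MMor_k(E) there is an admissible monomorphism from X• into an injective object of MMor_k(E). -/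
open CategoryTheory Limits

universe v u

namespace ExactStructure

variable {E : Type u} [Category.{v} E] [Preadditive E] [HasZeroObject E]

lemma admMono_comp_iso (S : ExactStructure E) {X Y Y' : E} {f : X ⟶ Y} (hf : S.AdmMono f)
    (e : Y ≅ Y') : S.AdmMono (f ≫ e.hom) := by
  obtain ⟨Z, g, h⟩ := hf
  exact ⟨Z, e.inv ≫ g, S.iso_closed (Iso.refl X) e (Iso.refl Z) (by simp) (by simp) h⟩

lemma coker_hom_ext (S : ExactStructure E) {X Y Z : E} {f : X ⟶ Y} {g : Y ⟶ Z} (h : S.ses f g)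
    {W : E} {u v : Z ⟶ W} (huv : g ≫ u = g ≫ v) : u = v := by
  have hc := (S.isCokernel h).some
  exact Cofork.IsColimit.hom_ext hc (by simpa using huv)

lemma coker_desc (S : ExactStructure E) {X Y Z : E} {f : X ⟶ Y} {g : Y ⟶ Z} (h : S.ses f g)
    {W : E} (w : Y ⟶ W) (hw : f ≫ w = 0) : ∃ d : Z ⟶ W, g ≫ d = w := by
  have hc := (S.isCokernel h).some
  obtain ⟨d, hd⟩ := CokernelCofork.IsColimit.desc' hc w hw
  exact ⟨d, by simpa using hd⟩

/-- The key extension lemma: given a morphism of admissible short exact sequences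
whose map on quotients is an admissible mono, a pair of compatible maps on `B` and `A'`
into an injective object extends to `B'`. -/
lemma ext_lemma (S : ExactStructure E) {A B Z A' B' Z' I : E}
    {f : A ⟶ B} {g : B ⟶ Z} {f' : A' ⟶ B'} {g' : B' ⟶ Z'}
    {α : A ⟶ A'} {β : B ⟶ B'} {ζ : Z ⟶ Z'} (hfg : S.ses f g) (hfg' : S.ses f' g')
    (hζ : S.AdmMono ζ) (sq1 : α ≫ f' = f ≫ β) (sq2 : β ≫ g' = g ≫ ζ)
    (hI : S.EInjective I) (vB : B ⟶ I) (vA' : A' ⟶ I) (compat : f ≫ vB = α ≫ vA') :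
    ∃ p : B' ⟶ I, f' ≫ p = vA' ∧ β ≫ p = vB := by
  obtain ⟨p₁, hp₁⟩ := hI f' ⟨Z', g', hfg'⟩ vA'
  have h0 : f ≫ (vB - β ≫ p₁) = 0 := by
    rw [Preadditive.comp_sub, compat, ← Category.assoc, ← sq1, Category.assoc, hp₁, sub_self]
  obtain ⟨d, hd⟩ := S.coker_desc hfg _ h0
  obtain ⟨s, hs⟩ := hI ζ hζ d
  refine ⟨p₁ + g' ≫ s, ?_, ?_⟩
  · rw [Preadditive.comp_add, hp₁, ← Category.assoc, S.comp_zero hfg', zero_comp, add_zero]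
  · have hgs : β ≫ g' ≫ s = vB - β ≫ p₁ := by
      rw [← Category.assoc, sq2, Category.assoc, hs, hd]
    rw [Preadditive.comp_add, hgs]
    abel

/-- Any object of `MMor_k(E)` with componentwise injective entries is injective. -/
lemma mmorInjective_of_components (S : ExactStructure E) {k : ℕ} (I : S.MMorObj k)
    (hI : ∀ i, S.EInjective (I.obj i)) : MMorInjective I := by
  intro A B f hf u
  obtain ⟨ZZ, gg, hses⟩ := hf
  classical
  have ext : ∀ (i : Fin k) (v : B.obj i.castSucc ⟶ I.obj i.castSucc),
      f.app i.castSucc ≫ v = u.app i.castSucc →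
      ∃ p : B.obj i.succ ⟶ I.obj i.succ,
        f.app i.succ ≫ p = u.app i.succ ∧ B.map i ≫ p = v ≫ I.map i := by
    intro i v hv
    exact S.ext_lemma (hses i.castSucc) (hses i.succ) (ZZ.adm i) (f.comm i) (gg.comm i)
      (hI i.succ) (v ≫ I.map i) (u.app i.succ)
      (by rw [← Category.assoc, hv, ← u.comm i])
  have base : {v : B.obj 0 ⟶ I.obj 0 // f.app 0 ≫ v = u.app 0} := by
    have h := hI 0 (f.app 0) ⟨_, _, hses 0⟩ (u.app 0)
    exact ⟨h.choose, h.choose_spec⟩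
  let step : ∀ (i : Fin k),
      {v : B.obj i.castSucc ⟶ I.obj i.castSucc // f.app i.castSucc ≫ v = u.app i.castSucc} →
      {v : B.obj i.succ ⟶ I.obj i.succ // f.app i.succ ≫ v = u.app i.succ} :=
    fun i v => ⟨(ext i v.1 v.2).choose, (ext i v.1 v.2).choose_spec.1⟩
  let V : ∀ i : Fin (k + 1), {v : B.obj i ⟶ I.obj i // f.app i ≫ v = u.app i} :=
    Fin.induction base step
  refine ⟨⟨fun i => (V i).1, ?_⟩, fun i => (V i).2⟩
  intro i
  show B.map i ≫ (V i.succ).1 = (V i.castSucc).1 ≫ I.map i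
  have hV : V i.succ = step i (V i.castSucc) := Fin.induction_succ _ _ i
  rw [hV]
  exact (ext i (V i.castSucc).1 (V i.castSucc).2).choose_spec.2

/-- Data of an admissible embedding of `A` into an injective with chosen quotient. -/
structure EmbData (S : ExactStructure E) (A : E) where
  I : E
  φ : A ⟶ I
  Q : E
  g : I ⟶ Q
  inj : S.EInjective I
  hses : S.ses φ g

/-- Data for one step of the recursive embedding construction. -/
structure StepData (S : ExactStructure E) {A A' : E} (x : A ⟶ A') (D : S.EmbData A) where
  next : S.EmbData A'
  σ : D.I ⟶ next.I
  τ : D.Q ⟶ next.Q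
  admσ : S.AdmMono σ
  admτ : S.AdmMono τ
  comm1 : x ≫ next.φ = D.φ ≫ σ
  comm2 : σ ≫ next.g = D.g ≫ τ

lemma step_nonempty (S : ExactStructure E)
    (hE : ∀ X : E, ∃ (I : E) (ι : X ⟶ I), S.EInjective I ∧ S.AdmMono ι)
    {A A' : E} (x : A ⟶ A') (hx : S.AdmMono x) (D : S.EmbData A) :
    Nonempty (S.StepData x D) := by
  obtain ⟨I, a, Q, p, injI, hap⟩ := D
  obtain ⟨P, aP, iP, hPO, admaP⟩ := S.mono_pushout a x ⟨Q, p, hap⟩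
  -- hPO : IsPushout x a aP iP, i.e. x ≫ aP = a ≫ iP
  have admiP : S.AdmMono iP := by
    obtain ⟨P₂, f₂, t₂, hPO₂, admf₂⟩ := S.mono_pushout x a hx
    -- hPO₂ : IsPushout a x f₂ t₂, i.e. a ≫ f₂ = x ≫ t₂
    obtain ⟨e1, he1a, he1b⟩ : ∃ e1 : P₂ ⟶ P, f₂ ≫ e1 = iP ∧ t₂ ≫ e1 = aP :=
      ⟨hPO₂.desc iP aP hPO.w.symm, hPO₂.inl_desc _ _ _, hPO₂.inr_desc _ _ _⟩
    obtain ⟨e2, he2a, he2b⟩ : ∃ e2 : P ⟶ P₂, aP ≫ e2 = t₂ ∧ iP ≫ e2 = f₂ :=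
      ⟨hPO.desc t₂ f₂ hPO₂.w.symm, hPO.inl_desc _ _ _, hPO.inr_desc _ _ _⟩
    have h12 : e1 ≫ e2 = 𝟙 P₂ := by
      apply hPO₂.hom_ext
      · rw [← Category.assoc, he1a, he2b, Category.comp_id]
      · rw [← Category.assoc, he1b, he2a, Category.comp_id]
    have h21 : e2 ≫ e1 = 𝟙 P := by
      apply hPO.hom_ext
      · rw [← Category.assoc, he2a, he1b, Category.comp_id]
      · rw [← Category.assoc, he2b, he1a, Category.comp_id]
    rw [← he1a]
    exact S.admMono_comp_iso admf₂ ⟨e1, e2, h12, h21⟩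
  have hπw : x ≫ (0 : A' ⟶ Q) = a ≫ p := by rw [Limits.comp_zero, S.comp_zero hap]
  obtain ⟨π, hπ1, hπ2⟩ : ∃ π : P ⟶ Q, aP ≫ π = 0 ∧ iP ≫ π = p :=
    ⟨hPO.desc 0 p hπw, hPO.inl_desc _ _ _, hPO.inr_desc _ _ _⟩
  obtain ⟨K, m, injK, admm⟩ := hE P
  obtain ⟨Q', p', hap'⟩ := S.mono_comp admaP admm
  -- hap' : S.ses (aP ≫ m) p'
  have hτ0 : a ≫ ((iP ≫ m) ≫ p') = 0 := by
    simp only [← Category.assoc]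
    rw [← hPO.w]
    simp only [Category.assoc]
    rw [← Category.assoc aP m p', S.comp_zero hap', Limits.comp_zero]
  obtain ⟨τ, hτ⟩ := S.coker_desc hap ((iP ≫ m) ≫ p') hτ0
  -- hτ : p ≫ τ = (iP ≫ m) ≫ p'
  obtain ⟨Phat, c', that, hPO3, admc'⟩ := S.mono_pushout m π admm
  -- hPO3 : IsPushout π m c' that, i.e. π ≫ c' = m ≫ that
  have hπτ : π ≫ τ = m ≫ p' := by
    apply hPO.hom_ext
    · rw [← Category.assoc, hπ1, zero_comp, ← Category.assoc, S.comp_zero hap']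
    · rw [← Category.assoc, hπ2, hτ, Category.assoc]
  obtain ⟨χ, hχ1, hχ2⟩ : ∃ χ : Phat ⟶ Q', c' ≫ χ = τ ∧ that ≫ χ = p' :=
    ⟨hPO3.desc τ p' hπτ, hPO3.inl_desc _ _ _, hPO3.inr_desc _ _ _⟩
  have ht0 : (aP ≫ m) ≫ that = 0 := by
    rw [Category.assoc, ← hPO3.w, ← Category.assoc, hπ1, zero_comp]
  obtain ⟨ω, hω⟩ := S.coker_desc hap' that ht0
  -- hω : p' ≫ ω = that
  have hτω : τ ≫ ω = c' := by
    apply S.coker_hom_ext hap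
    rw [← Category.assoc, hτ, Category.assoc, hω, Category.assoc, ← hPO3.w,
      ← Category.assoc, hπ2]
  have hχω : χ ≫ ω = 𝟙 Phat := by
    apply hPO3.hom_ext
    · rw [← Category.assoc, hχ1, hτω, Category.comp_id]
    · rw [← Category.assoc, hχ2, hω, Category.comp_id]
  have hωχ : ω ≫ χ = 𝟙 Q' := by
    apply S.coker_hom_ext hap'
    rw [← Category.assoc, hω, hχ2, Category.comp_id]
  have admτ : S.AdmMono τ := by
    rw [← hχ1]
    exact S.admMono_comp_iso admc' ⟨χ, ω, hχω, hωχ⟩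
  refine ⟨⟨⟨K, aP ≫ m, Q', p', injK, hap'⟩, iP ≫ m, τ, S.mono_comp admiP admm, admτ, ?_, hτ.symm⟩⟩
  rw [← Category.assoc, hPO.w, Category.assoc]

end ExactStructure


/-- If the exact category `E` has enough injectives, then so does the
monomorphism category `MMor_k(E)`: every object admits an admissible monomorphism into an
injective object of `MMor_k(E)`. -/
theorem mmor_enough_injectives
    {E : Type u} [Category.{v} E] [Preadditive E] [HasZeroObject E]
    (S : ExactStructure E) (k : ℕ)
    (hE : ∀ X : E, ∃ (I : E) (ι : X ⟶ I), S.EInjective I ∧ S.AdmMono ι) :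
    ∀ X : S.MMorObj k, ∃ (I : S.MMorObj k) (ι : S.MMorHom X I),
      ExactStructure.MMorInjective I ∧ ExactStructure.MMorAdmMono ι := by
  intro X
  classical
  have baseNE : Nonempty (S.EmbData (X.obj 0)) := by
    obtain ⟨J, e, injJ, adme⟩ := hE (X.obj 0)
    obtain ⟨Q, p, h⟩ := adme
    exact ⟨⟨J, e, Q, p, injJ, h⟩⟩
  let step : ∀ (i : Fin k) (D : S.EmbData (X.obj i.castSucc)), S.StepData (X.map i) D :=
    fun i D => (S.step_nonempty hE (X.map i) (X.adm i) D).some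
  let V : ∀ i : Fin (k + 1), S.EmbData (X.obj i) :=
    Fin.induction baseNE.some (fun i D => (step i D).next)
  have hV : ∀ i : Fin k, V i.succ = (step i (V i.castSucc)).next :=
    fun i => Fin.induction_succ _ _ i
  have masterAdmσ : ∀ (i : Fin k) (D' : S.EmbData (X.obj i.succ))
      (hD : (step i (V i.castSucc)).next = D'),
      S.AdmMono ((step i (V i.castSucc)).σ ≫
        eqToHom (congrArg (fun D : S.EmbData (X.obj i.succ) => D.I) hD)) := by
    intro i D' hD
    cases hD
    simpa using (step i (V i.castSucc)).admσ
  have masterAdmτ : ∀ (i : Fin k) (D' : S.EmbData (X.obj i.succ))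
      (hD : (step i (V i.castSucc)).next = D'),
      S.AdmMono ((step i (V i.castSucc)).τ ≫
        eqToHom (congrArg (fun D : S.EmbData (X.obj i.succ) => D.Q) hD)) := by
    intro i D' hD
    cases hD
    simpa using (step i (V i.castSucc)).admτ
  have masterComm1 : ∀ (i : Fin k) (D' : S.EmbData (X.obj i.succ))
      (hD : (step i (V i.castSucc)).next = D'),
      X.map i ≫ D'.φ = (V i.castSucc).φ ≫ ((step i (V i.castSucc)).σ ≫
        eqToHom (congrArg (fun D : S.EmbData (X.obj i.succ) => D.I) hD)) := by
    intro i D' hD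
    cases hD
    simpa using (step i (V i.castSucc)).comm1
  have masterComm2 : ∀ (i : Fin k) (D' : S.EmbData (X.obj i.succ))
      (hD : (step i (V i.castSucc)).next = D'),
      ((step i (V i.castSucc)).σ ≫
          eqToHom (congrArg (fun D : S.EmbData (X.obj i.succ) => D.I) hD)) ≫ D'.g
        = (V i.castSucc).g ≫ ((step i (V i.castSucc)).τ ≫
          eqToHom (congrArg (fun D : S.EmbData (X.obj i.succ) => D.Q) hD)) := by
    intro i D' hD
    cases hD
    simpa using (step i (V i.castSucc)).comm2
  refine ⟨⟨fun i => (V i).I,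
      fun i => (step i (V i.castSucc)).σ ≫
        eqToHom (congrArg (fun D : S.EmbData (X.obj i.succ) => D.I) (hV i).symm),
      fun i => masterAdmσ i _ (hV i).symm⟩,
    ⟨fun i => (V i).φ, fun i => masterComm1 i _ (hV i).symm⟩,
    S.mmorInjective_of_components _ (fun i => (V i).inj),
    ⟨⟨fun i => (V i).Q,
      fun i => (step i (V i.castSucc)).τ ≫
        eqToHom (congrArg (fun D : S.EmbData (X.obj i.succ) => D.Q) (hV i).symm),
      fun i => masterAdmτ i _ (hV i).symm⟩,
    ⟨fun i => (V i).g, fun i => masterComm2 i _ (hV i).symm⟩,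
    fun i => (V i).hses⟩⟩
end

section
/- Let A be an abelian category that is Frobenius exact. The functor F : C^{ac}_N(Proj A) → MMor_{N−2}(A), P• ↦ (Z^0_1(P•) ↪ ... ↪ Z^0_{N−1}(P•)), sends chainwise split short exact sequences of acyclic N-complexes of projectives to componentwise short exact sequences of monomorphism diagrams. -/
open CategoryTheory Limits

universe v u

variable {A : Type u} [Category.{v} A] [Abelian A]

/-- The composite of `r` consecutive differentials of an `N`-complex, starting in
degree `n`. -/
def dComp (X : ℤ → A) (d : ∀ n : ℤ, X n ⟶ X (n + 1)) (n : ℤ) :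
    ∀ r : ℕ, X n ⟶ X (n + r)
  | 0 => eqToHom (congrArg X (by simp))
  | (r + 1) => dComp X d n r ≫ d (n + r) ≫ eqToHom (congrArg X (by push_cast; ring))

/-- `(X, d)` is an `N`-complex: any composite of `N` consecutive differentials is zero. -/
def IsNComplex (X : ℤ → A) (d : ∀ n : ℤ, X n ⟶ X (n + 1)) (N : ℕ) : Prop :=
  ∀ n : ℤ, dComp X d n N = 0

/-- The `N`-complex `(X, d)` is acyclic: for all `n` and `1 ≤ r < N`, the cycles
`Z^n_r = ker(d^{n,r})` coincide with the boundaries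
`B^n_r = im(d^{n-(N-r), N-r})` as subobjects of `X n`. -/
def NAcyclic (X : ℤ → A) (d : ∀ n : ℤ, X n ⟶ X (n + 1)) (N : ℕ) : Prop :=
  ∀ (n : ℤ) (r : ℕ), 1 ≤ r → r < N →
    kernelSubobject (dComp X d n r) =
      imageSubobject (dComp X d (n - (N - r : ℕ)) (N - r) ≫ eqToHom (congrArg X (by ring)))

lemma fam_eqToHom_comm {X Y : ℤ → A} (φ : ∀ n, X n ⟶ Y n) {m m' : ℤ} (h : m = m') :
    eqToHom (congrArg X h) ≫ φ m' = φ m ≫ eqToHom (congrArg Y h) := by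
  subst h; simp

lemma dComp_congr (X : ℤ → A) (d : ∀ n : ℤ, X n ⟶ X (n + 1)) {n m : ℤ} (h : n = m) (r : ℕ) :
    dComp X d n r = eqToHom (congrArg X h) ≫ dComp X d m r ≫
      eqToHom (congrArg X (by rw [h])) := by
  subst h; simp

lemma dComp_congr' (X : ℤ → A) (d : ∀ n : ℤ, X n ⟶ X (n + 1)) {r s : ℕ} (hr : r = s)
    {n m : ℤ} (h : n = m) :
    dComp X d n r = eqToHom (congrArg X h) ≫ dComp X d m s ≫
      eqToHom (congrArg X (by rw [h, hr])) := by
  subst hr; subst h; simp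

lemma imageSubobject_dComp_eq (X : ℤ → A) (d : ∀ n : ℤ, X n ⟶ X (n + 1)) {r s : ℕ}
    (hr : r = s) {n m : ℤ} (h : n = m) {T : A} (e : X (n + r) = T) (e' : X (m + s) = T) :
    imageSubobject (dComp X d n r ≫ eqToHom e) =
      imageSubobject (dComp X d m s ≫ eqToHom e') := by
  subst hr; subst h; rfl

lemma dComp_add (X : ℤ → A) (d : ∀ n : ℤ, X n ⟶ X (n + 1)) (n : ℤ) (r s : ℕ) :
    dComp X d n (r + s) =
      dComp X d n r ≫ dComp X d (n + r) s ≫ eqToHom (congrArg X (by push_cast; ring)) := by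
  induction s with
  | zero => simp [dComp]
  | succ s ih =>
      show dComp X d n ((r + s) + 1) = _
      rw [dComp, ih, dComp]
      simp only [Category.assoc]
      congr 2
      rw [← Category.assoc, fam_eqToHom_comm (X := X) (Y := fun m => X (m + 1)) d
        (show (n + (r:ℤ)) + (s:ℤ) = n + ((r + s : ℕ) : ℤ) by push_cast; ring)]
      simp

lemma dComp_natural {X Y : ℤ → A} {dX : ∀ n : ℤ, X n ⟶ X (n + 1)}
    {dY : ∀ n : ℤ, Y n ⟶ Y (n + 1)} (φ : ∀ n, X n ⟶ Y n)
    (hφ : ∀ n, φ n ≫ dY n = dX n ≫ φ (n + 1)) (n : ℤ) (r : ℕ) :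
    dComp X dX n r ≫ φ (n + r) = φ n ≫ dComp Y dY n r := by
  induction r with
  | zero => simp only [dComp]; exact fam_eqToHom_comm φ (show n = n + ((0:ℕ):ℤ) by simp)
  | succ r ih =>
      rw [dComp, dComp]
      simp only [Category.assoc]
      rw [fam_eqToHom_comm φ (show (n + (r:ℤ)) + 1 = n + ((r + 1 : ℕ) : ℤ) by push_cast; ring),
        ← Category.assoc (dX _), ← hφ (n + r), Category.assoc,
        ← Category.assoc (dComp X dX n r), ih]
      simp

open CategoryTheory.Abelian
attribute [local instance] CategoryTheory.Abelian.Pseudoelement.objectToSort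
  CategoryTheory.Abelian.Pseudoelement.homToFun

lemma pe_congr {X Y : A} {f g : X ⟶ Y} (h : f = g) (a : Pseudoelement X) :
    Pseudoelement.pseudoApply f a = Pseudoelement.pseudoApply g a := by rw [h]


/-- Over a Frobenius exact abelian category `A`, the functor
`F : C^{ac}_N(Proj A) → MMor_{N−2}(A)`, `P• ↦ (Z^0_1(P•) ↪ ... ↪ Z^0_{N−1}(P•))`, sends
chainwise split short exact sequences `P• ↣ Q• ↠ R•` of acyclic `N`-complexes of
projectives to componentwise short exact sequences of cycle objects: for every
`1 ≤ j ≤ N − 1`, the induced maps `Z^0_j(P•) → Z^0_j(Q•) → Z^0_j(R•)` form a short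
exact sequence. -/
theorem cycle_diagram_functor_exact
    {A : Type u} [Category.{v} A] [Abelian A]
    [EnoughProjectives A] [EnoughInjectives A]
    (hfrob : ∀ X : A, Projective X ↔ Injective X)
    (N : ℕ) (hN : 2 ≤ N)
    (P Q R : ℤ → A)
    (dP : ∀ n : ℤ, P n ⟶ P (n + 1)) (dQ : ∀ n : ℤ, Q n ⟶ Q (n + 1))
    (dR : ∀ n : ℤ, R n ⟶ R (n + 1))
    (hPcx : IsNComplex P dP N) (hQcx : IsNComplex Q dQ N) (hRcx : IsNComplex R dR N)
    (hPproj : ∀ n, Projective (P n)) (hQproj : ∀ n, Projective (Q n))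
    (hRproj : ∀ n, Projective (R n))
    (hPac : NAcyclic P dP N) (hQac : NAcyclic Q dQ N) (hRac : NAcyclic R dR N)
    -- a chainwise split short exact sequence of `N`-complexes `P• ↣ Q• ↠ R•`
    (u : ∀ n, P n ⟶ Q n) (v : ∀ n, Q n ⟶ R n)
    (hu : ∀ n, u n ≫ dQ n = dP n ≫ u (n + 1))
    (hv : ∀ n, v n ≫ dR n = dQ n ≫ v (n + 1))
    (w : ∀ n, u n ≫ v n = 0)
    (hsplit : ∀ n, Nonempty ((ShortComplex.mk (u n) (v n) (w n)).Splitting)) :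
    ∀ j : ℕ, 1 ≤ j → j ≤ N - 1 →
      ∀ (uZ : kernel (dComp P dP 0 j) ⟶ kernel (dComp Q dQ 0 j))
        (vZ : kernel (dComp Q dQ 0 j) ⟶ kernel (dComp R dR 0 j)),
        uZ ≫ kernel.ι (dComp Q dQ 0 j) = kernel.ι (dComp P dP 0 j) ≫ u 0 →
        vZ ≫ kernel.ι (dComp R dR 0 j) = kernel.ι (dComp Q dQ 0 j) ≫ v 0 →
        ∀ wZ : uZ ≫ vZ = 0, (ShortComplex.mk uZ vZ wZ).ShortExact := by
  intro j hj1 hj2 uZ vZ huZ hvZ wZ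
  have hjN : j ≤ N := by omega
  -- short exactness in each degree
  have sE : ∀ n, (ShortComplex.mk (u n) (v n) (w n)).ShortExact :=
    fun n => (hsplit n).some.shortExact
  -- composite of j and N - j differentials is zero
  have key : ∀ (X : ℤ → A) (dX : ∀ n : ℤ, X n ⟶ X (n + 1)), IsNComplex X dX N →
      dComp X dX 0 j ≫ dComp X dX ((0 : ℤ) + (j : ℕ)) (N - j) = 0 := by
    intro X dX hX
    have hNsum : j + (N - j) = N := Nat.add_sub_cancel' hjN
    have hX0 : dComp X dX 0 (j + (N - j)) = 0 := by rw [hNsum]; exact hX 0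
    have hadd := dComp_add X dX 0 j (N - j)
    rw [hX0] at hadd
    apply (cancel_mono (eqToHom (congrArg X
      (show ((0 : ℤ) + (j : ℕ)) + ((N - j : ℕ) : ℤ) = (0 : ℤ) + ((j + (N - j) : ℕ) : ℤ) by
        push_cast; ring)))).1
    rw [Category.assoc, ← hadd]
    simp
  -- exactness of P 0 ⟶ P j ⟶ P N at P j, from acyclicity of P
  have hPex : (ShortComplex.mk (dComp P dP 0 j) (dComp P dP ((0 : ℤ) + (j : ℕ)) (N - j))
      (key P dP hPcx)).Exact := by
    rw [ShortComplex.exact_iff_image_eq_kernel]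
    show imageSubobject (dComp P dP 0 j) =
      kernelSubobject (dComp P dP ((0 : ℤ) + (j : ℕ)) (N - j))
    have hac := hPac ((0 : ℤ) + (j : ℕ)) (N - j) (by omega) (by omega)
    have himg : imageSubobject (dComp P dP (((0 : ℤ) + (j : ℕ)) - ((N - (N - j) : ℕ) : ℤ))
          (N - (N - j)) ≫ eqToHom (congrArg P (by ring))) =
        imageSubobject (dComp P dP 0 j ≫ eqToHom rfl) :=
      imageSubobject_dComp_eq P dP (Nat.sub_sub_self hjN) (by omega) _ rfl
    rw [hac, himg]
    simp
  -- kernel pair exactness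
  have kex : ∀ {X Y : A} (f : X ⟶ Y),
      (ShortComplex.mk (kernel.ι f) f (kernel.condition f)).Exact :=
    fun f => ShortComplex.exact_of_f_is_kernel _ (kernelIsKernel f)
  -- naturality of dComp
  have hufP : dComp P dP 0 j ≫ u ((0 : ℤ) + (j : ℕ)) = u 0 ≫ dComp Q dQ 0 j :=
    dComp_natural u hu 0 j
  have hvfQ : dComp Q dQ 0 j ≫ v ((0 : ℤ) + (j : ℕ)) = v 0 ≫ dComp R dR 0 j :=
    dComp_natural v hv 0 j
  have hugP : dComp P dP ((0 : ℤ) + (j : ℕ)) (N - j) ≫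
        u (((0 : ℤ) + (j : ℕ)) + ((N - j : ℕ) : ℤ)) =
      u ((0 : ℤ) + (j : ℕ)) ≫ dComp Q dQ ((0 : ℤ) + (j : ℕ)) (N - j) :=
    dComp_natural u hu _ (N - j)
  -- mono
  haveI : Mono (u 0) := (sE 0).mono_f
  haveI hMuZ : Mono uZ := by
    have : Mono (uZ ≫ kernel.ι (dComp Q dQ 0 j)) := by rw [huZ]; exact mono_comp _ _
    exact mono_of_mono uZ (kernel.ι (dComp Q dQ 0 j))
  -- epi
  haveI hm1 : Mono (u ((0 : ℤ) + (j : ℕ))) := (sE _).mono_f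
  haveI hm2 : Mono (u (((0 : ℤ) + (j : ℕ)) + ((N - j : ℕ) : ℤ))) := (sE _).mono_f
  haveI hEvZ : Epi vZ := by
    apply Pseudoelement.epi_of_pseudo_surjective
    intro z
    obtain ⟨σ⟩ := hsplit 0
    -- x is a lift of (ι z) to Q 0
    set c : kernel (dComp R dR 0 j) ⟶ Q 0 := kernel.ι (dComp R dR 0 j) ≫ σ.s with hc
    have e1 : c ≫ v 0 = kernel.ι (dComp R dR 0 j) := by
      rw [hc, Category.assoc]
      have : σ.s ≫ v 0 = 𝟙 _ := σ.s_g
      rw [this, Category.comp_id]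
    -- step A : v_j (fQ x) = 0
    have hA : (v ((0 : ℤ) + (j : ℕ))) ((dComp Q dQ 0 j) ((c : _ ⟶ _) z)) = 0 := by
      rw [← Pseudoelement.comp_apply, ← Pseudoelement.comp_apply]
      have : c ≫ dComp Q dQ 0 j ≫ v ((0 : ℤ) + (j : ℕ)) = 0 := by
        rw [hvfQ, ← Category.assoc, e1, kernel.condition]
      rw [pe_congr this, Pseudoelement.zero_apply]
    -- step B : find p in P j mapping to fQ x
    obtain ⟨p, hp⟩ := Pseudoelement.pseudo_exact_of_exact (sE ((0 : ℤ) + (j : ℕ))).exact _ hA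
    have hp' : (u ((0 : ℤ) + (j : ℕ))) p = (dComp Q dQ 0 j) ((c : _ ⟶ _) z) := hp
    -- step C : gP p = 0
    have hC : (dComp P dP ((0 : ℤ) + (j : ℕ)) (N - j)) p = 0 := by
      apply Pseudoelement.zero_of_map_zero _
        (Pseudoelement.pseudo_injective_of_mono
          (u (((0 : ℤ) + (j : ℕ)) + ((N - j : ℕ) : ℤ))))
      rw [← Pseudoelement.comp_apply, pe_congr hugP, Pseudoelement.comp_apply]
      rw [hp', ← Pseudoelement.comp_apply, ← Pseudoelement.comp_apply,
        pe_congr (show c ≫ dComp Q dQ 0 j ≫ dComp Q dQ ((0 : ℤ) + (j : ℕ)) (N - j) = 0 by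
          rw [key Q dQ hQcx, Limits.comp_zero]), Pseudoelement.zero_apply]
    -- step D : find p0 in P 0 with fP p0 = p
    obtain ⟨p0, hp0⟩ := Pseudoelement.pseudo_exact_of_exact hPex _ hC
    have hp0' : (dComp P dP 0 j) p0 = p := hp0
    -- step E : fQ (u 0 p0) = fQ x
    have hE : (dComp Q dQ 0 j) ((u 0) p0) = (dComp Q dQ 0 j) ((c : _ ⟶ _) z) := by
      rw [← Pseudoelement.comp_apply, pe_congr hufP.symm, Pseudoelement.comp_apply, hp0']
      exact hp'
    -- step F : the "difference" q of x and u 0 p0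
    obtain ⟨q, hq0, hqg⟩ :=
      Pseudoelement.sub_of_eq_image (dComp Q dQ 0 j) ((c : _ ⟶ _) z) ((u 0) p0) hE.symm
    have hv0y : (v 0) ((u 0) p0) = 0 := by
      rw [← Pseudoelement.comp_apply, pe_congr (w 0), Pseudoelement.zero_apply]
    have hv0q : (v 0) q = (v 0) ((c : _ ⟶ _) z) := hqg _ (v 0) hv0y
    -- step G : q comes from the kernel of fQ
    obtain ⟨q', hq'⟩ := Pseudoelement.pseudo_exact_of_exact (kex (dComp Q dQ 0 j)) q hq0
    have hq'' : (kernel.ι (dComp Q dQ 0 j)) q' = q := hq'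
    refine ⟨q', ?_⟩
    show (vZ) q' = z
    apply Pseudoelement.pseudo_injective_of_mono (kernel.ι (dComp R dR 0 j))
    rw [← Pseudoelement.comp_apply, pe_congr hvZ, Pseudoelement.comp_apply, hq'', hv0q,
      ← Pseudoelement.comp_apply, pe_congr e1]
  -- exactness in the middle
  refine ShortComplex.ShortExact.mk' ?_ hMuZ hEvZ
  apply Pseudoelement.exact_of_pseudo_exact
  intro b hb
  have hb' : (vZ) b = 0 := hb
  have h1 : (v 0) ((kernel.ι (dComp Q dQ 0 j)) b) = 0 := by
    rw [← Pseudoelement.comp_apply, pe_congr hvZ.symm, Pseudoelement.comp_apply, hb',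
      Pseudoelement.apply_zero]
  obtain ⟨a, ha⟩ := Pseudoelement.pseudo_exact_of_exact (sE 0).exact _ h1
  have ha' : (u 0) a = (kernel.ι (dComp Q dQ 0 j)) b := ha
  have h2 : (dComp P dP 0 j) a = 0 := by
    apply Pseudoelement.zero_of_map_zero _
      (Pseudoelement.pseudo_injective_of_mono (u ((0 : ℤ) + (j : ℕ))))
    rw [← Pseudoelement.comp_apply, pe_congr hufP, Pseudoelement.comp_apply, ha',
      ← Pseudoelement.comp_apply, pe_congr (kernel.condition (dComp Q dQ 0 j)),
      Pseudoelement.zero_apply]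
  obtain ⟨a', ha2⟩ := Pseudoelement.pseudo_exact_of_exact (kex (dComp P dP 0 j)) _ h2
  have ha3 : (kernel.ι (dComp P dP 0 j)) a' = a := ha2
  refine ⟨a', ?_⟩
  show (uZ) a' = b
  apply Pseudoelement.pseudo_injective_of_mono (kernel.ι (dComp Q dQ 0 j))
  rw [← Pseudoelement.comp_apply, pe_congr huZ, Pseudoelement.comp_apply, ha3, ha']
end
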